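/- For q = 2 and n ≥ 3, the exchange property for minimal resolving sets does not hold in the non-zero component graph Γ(V). -/

import Mathlib

/-- `W` is a resolving set of `G`: distinct vertices have distinct distance vectors to `W`. -/
def Resolves {α : Type*} (G : SimpleGraph α) (W : Set α) : Prop :=
  ∀ u v : α, (∀ w ∈ W, G.dist u w = G.dist v w) → u = v

/-- The metric dimension of `G`: minimum cardinality of a resolving set. -/
noncomputable def metricDim {α : Type*} (G : SimpleGraph α) : ℕ :=
  sInf {k | ∃ W : Set α, W.ncard = k ∧ Resolves G W}

/-- A minimal resolving set: no proper subset resolves. -/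
def MinimalResolves {α : Type*} (G : SimpleGraph α) (W : Set α) : Prop :=
  Resolves G W ∧ ∀ W' ⊂ W, ¬ Resolves G W'

/-- The exchange property for minimal resolving sets. -/
def ExchangeProperty {α : Type*} (G : SimpleGraph α) : Prop :=
  ∀ W₁ W₂ : Set α, MinimalResolves G W₁ → MinimalResolves G W₂ →
    ∀ r ∈ W₁, ∃ s ∈ W₂, MinimalResolves G (insert r (W₂ \ {s}))

/-- `u` and `v` are twins: equal open neighborhoods or equal closed neighborhoods. -/
def Twins {α : Type*} (G : SimpleGraph α) (u v : α) : Prop :=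
  G.neighborSet u = G.neighborSet v ∨
    insert u (G.neighborSet u) = insert v (G.neighborSet v)

/-- The non-zero component graph of `Fin n → F` with respect to the standard basis:
vertices are the non-zero vectors, adjacency means the supports (skeletons) intersect. -/
def NZCGraph (F : Type*) [Field F] (n : ℕ) :
    SimpleGraph {v : Fin n → F // v ≠ 0} where
  Adj u v := u ≠ v ∧ ∃ i, (u : Fin n → F) i ≠ 0 ∧ (v : Fin n → F) i ≠ 0
  symm := ⟨by
    rintro u v ⟨h, i, hu, hv⟩
    exact ⟨h.symm, i, hv, hu⟩⟩
  loopless := ⟨by rintro u ⟨h, _⟩; exact h rfl⟩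

/-!
In `Γ(V)` two distinct vertices with disjoint supports have the common neighbour `u + v`, so all
distances are `0`, `1` or `2`, and `W` resolves `Γ(V)` exactly when every vertex outside `W` is
determined by the set of members of `W` its support meets. Over `GF(2)` a vector is its support,
so the standard basis `B` and the hyperplane `H = {v | v₀ = 0}` are minimal resolving sets.
Exchanging `e₀ ∈ B` for some `s ∈ H` never gives a minimal resolving set: if `s = eⱼ`, the
all-ones vector and the one with `j`-th coordinate `0` are no longer separated; otherwise, for
`n ≥ 4`, the new set properly contains `B`. For `n = 3` the second case can return exactly `B`,
so there a different four-element minimal resolving set is checked exhaustively.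
-/

open Set Function

section Resolving

variable {α : Type*} {G : SimpleGraph α} {W W' : Set α}

theorem Resolves.mono (h : W ⊆ W') (hW : Resolves G W) : Resolves G W' :=
  fun u v huv => hW u v fun w hw => huv w (h hw)

theorem minimalResolves_iff :
    MinimalResolves G W ↔ Resolves G W ∧ ∀ x ∈ W, ¬ Resolves G (W \ {x}) := by
  refine and_congr_right fun _ => ⟨fun h x hx => h _ (sdiff_singleton_ssubset.2 hx), ?_⟩
  intro h W' hW' hres
  obtain ⟨x, hxW, hxW'⟩ := exists_of_ssubset hW'
  exact h x hxW (hres.mono (subset_sdiff_singleton hW'.subset hxW'))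

section DiamLeTwo

variable {u v w : α}

theorem dist_eq_two_of_diam_le_two (hG : ∀ u v, u ≠ v → ¬ G.Adj u v → ∃ w, G.Adj u w ∧ G.Adj w v)
    (huv : u ≠ v) (hadj : ¬ G.Adj u v) : G.dist u v = 2 := by
  obtain ⟨w, huw, hwv⟩ := hG u v huv hadj
  have hle : G.dist u v ≤ 2 := SimpleGraph.dist_le (.cons huw (.cons hwv .nil))
  have hpos : 0 < G.dist u v := (huw.reachable.trans hwv.reachable).pos_dist_of_ne huv
  have hne : G.dist u v ≠ 1 := fun h => hadj (SimpleGraph.dist_eq_one_iff_adj.1 h)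
  omega

theorem eq_of_dist_eq_zero_of_diam_le_two
    (hG : ∀ u v, u ≠ v → ¬ G.Adj u v → ∃ w, G.Adj u w ∧ G.Adj w v) (h : G.dist u v = 0) :
    u = v := by
  by_contra huv
  by_cases hadj : G.Adj u v
  · rw [SimpleGraph.dist_eq_one_iff_adj.2 hadj] at h
    exact one_ne_zero h
  · rw [dist_eq_two_of_diam_le_two hG huv hadj] at h
    exact two_ne_zero h

theorem dist_eq_dist_iff_of_diam_le_two
    (hG : ∀ u v, u ≠ v → ¬ G.Adj u v → ∃ w, G.Adj u w ∧ G.Adj w v) (hu : u ≠ w) (hv : v ≠ w) :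
    G.dist u w = G.dist v w ↔ (G.Adj u w ↔ G.Adj v w) := by
  by_cases hu' : G.Adj u w <;> by_cases hv' : G.Adj v w <;>
    simp [hu', hv', SimpleGraph.dist_eq_one_iff_adj.2, dist_eq_two_of_diam_le_two hG, hu, hv]

theorem resolves_iff_of_diam_le_two
    (hG : ∀ u v, u ≠ v → ¬ G.Adj u v → ∃ w, G.Adj u w ∧ G.Adj w v) :
    Resolves G W ↔ ∀ u v, u ∉ W → v ∉ W → (∀ w ∈ W, G.Adj u w ↔ G.Adj v w) → u = v := by
  refine ⟨fun h u v hu hv hadj => h u v fun w hw => ?_, fun h u v huv => ?_⟩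
  · exact (dist_eq_dist_iff_of_diam_le_two hG (ne_of_mem_of_not_mem hw hu).symm
      (ne_of_mem_of_not_mem hw hv).symm).2 (hadj w hw)
  by_cases hu : u ∈ W
  · exact (eq_of_dist_eq_zero_of_diam_le_two hG ((huv u hu).symm.trans G.dist_self)).symm
  by_cases hv : v ∈ W
  · exact eq_of_dist_eq_zero_of_diam_le_two hG ((huv v hv).trans G.dist_self)
  exact h u v hu hv fun w hw => (dist_eq_dist_iff_of_diam_le_two hG
    (ne_of_mem_of_not_mem hw hu).symm (ne_of_mem_of_not_mem hw hv).symm).1 (huv w hw)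

end DiamLeTwo

end Resolving

namespace NZCGraph

section Field

variable {F : Type*} [Field F] {n : ℕ}

def Meets (u w : {v : Fin n → F // v ≠ 0}) : Prop := ∃ i, u.1 i ≠ 0 ∧ w.1 i ≠ 0

instance [DecidableEq F] : DecidableRel (Meets (F := F) (n := n)) :=
  fun _ _ => inferInstanceAs (Decidable (∃ _, _ ∧ _))

def SupportResolves (W : Set {v : Fin n → F // v ≠ 0}) : Prop :=
  ∀ u v, u ∉ W → v ∉ W → (∀ w ∈ W, Meets u w ↔ Meets v w) → u = v

set_option synthInstance.maxSize 1000 in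
instance [DecidableEq F] [Fintype F] (W : Set {v : Fin n → F // v ≠ 0}) [DecidablePred (· ∈ W)] :
    Decidable (SupportResolves W) := by
  unfold SupportResolves; infer_instance

theorem exists_apply_ne_zero (u : {v : Fin n → F // v ≠ 0}) : ∃ i, u.1 i ≠ 0 :=
  Function.ne_iff.1 u.2

theorem adj_iff_meets {u w : {v : Fin n → F // v ≠ 0}} (h : u ≠ w) :
    (NZCGraph F n).Adj u w ↔ Meets u w :=
  and_iff_right h

theorem exists_adj_adj_of_not_adj (u v : {v : Fin n → F // v ≠ 0}) (huv : u ≠ v)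
    (h : ¬ (NZCGraph F n).Adj u v) : ∃ w, (NZCGraph F n).Adj u w ∧ (NZCGraph F n).Adj w v := by
  have hdisj : ∀ i, u.1 i ≠ 0 → v.1 i = 0 := fun i hu => by_contra fun hv => h ⟨huv, i, hu, hv⟩
  obtain ⟨i, hi⟩ := exists_apply_ne_zero u
  obtain ⟨j, hj⟩ := exists_apply_ne_zero v
  have huj : u.1 j = 0 := by_contra fun hu => hj (hdisj j hu)
  have hsum_i : (u.1 + v.1) i = u.1 i := by simp [hdisj i hi]
  have hsum_j : (u.1 + v.1) j = v.1 j := by simp [huj]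
  refine ⟨⟨u.1 + v.1, fun h0 => hi (by simpa [hsum_i] using congrFun h0 i)⟩,
    ⟨fun he => hj ?_, i, hi, hsum_i ▸ hi⟩, ⟨fun he => hi ?_, j, hsum_j ▸ hj, hj⟩⟩
  · simpa [huj] using (congrFun (congrArg Subtype.val he) j).symm
  · simpa [hdisj i hi] using congrFun (congrArg Subtype.val he) i

theorem resolves_iff {W : Set {v : Fin n → F // v ≠ 0}} :
    Resolves (NZCGraph F n) W ↔ SupportResolves W := by
  rw [resolves_iff_of_diam_le_two exists_adj_adj_of_not_adj]
  refine forall₄_congr fun u v hu hv => imp_congr_left (forall₂_congr fun w hw => ?_)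
  rw [adj_iff_meets (ne_of_mem_of_not_mem hw hu).symm,
    adj_iff_meets (ne_of_mem_of_not_mem hw hv).symm]

theorem not_resolves_of_meets_iff {W : Set {v : Fin n → F // v ≠ 0}}
    {u v : {v : Fin n → F // v ≠ 0}} (hu : u ∉ W) (hv : v ∉ W) (huv : u ≠ v)
    (h : ∀ w ∈ W, Meets u w ↔ Meets v w) :
    ¬ Resolves (NZCGraph F n) W :=
  fun hW => huv (resolves_iff.1 hW u v hu hv h)

def indicator (s : Finset (Fin n)) (hs : s.Nonempty) : {v : Fin n → F // v ≠ 0} :=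
  ⟨fun i => if i ∈ s then 1 else 0, fun h => by
    obtain ⟨i, hi⟩ := hs
    simpa [hi] using congrFun h i⟩

@[simp]
theorem indicator_apply_eq_zero {s : Finset (Fin n)} {hs : s.Nonempty} {i : Fin n} :
    (indicator (F := F) s hs).1 i = 0 ↔ i ∉ s := by
  simp [indicator]

theorem meets_comm {u w : {v : Fin n → F // v ≠ 0}} : Meets u w ↔ Meets w u :=
  exists_congr fun _ => and_comm

theorem meets_indicator {u : {v : Fin n → F // v ≠ 0}} {s : Finset (Fin n)} {hs : s.Nonempty} :
    Meets u (indicator s hs) ↔ ∃ i ∈ s, u.1 i ≠ 0 := by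
  simp [Meets, and_comm]

def single (i : Fin n) : {v : Fin n → F // v ≠ 0} :=
  indicator {i} (Finset.singleton_nonempty i)

@[simp]
theorem single_apply_eq_zero {i j : Fin n} : (single (F := F) i).1 j = 0 ↔ j ≠ i := by
  simp [single]

theorem meets_single {u : {v : Fin n → F // v ≠ 0}} {i : Fin n} :
    Meets u (single i) ↔ u.1 i ≠ 0 := by
  simp [single, meets_indicator]

theorem single_injective : Injective (single (F := F) (n := n)) := fun i j h => by
  simpa using congrArg (fun u => u.1 i = 0) h

variable (F n) in
def stdBasis : Set {v : Fin n → F // v ≠ 0} := range single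

def hyperplane (i₀ : Fin n) : Set {v : Fin n → F // v ≠ 0} := {w | w.1 i₀ = 0}

theorem notMem_stdBasis {u : {v : Fin n → F // v ≠ 0}} {a b : Fin n} (ha : u.1 a ≠ 0)
    (hb : u.1 b ≠ 0) (hab : a ≠ b) : u ∉ stdBasis F n := by
  rintro ⟨i, rfl⟩
  simp only [ne_eq, single_apply_eq_zero, not_not] at ha hb
  exact hab (ha.trans hb.symm)

end Field

section ZModTwo

variable {n : ℕ}

theorem ext_of_apply_ne_zero_iff {u v : {v : Fin n → ZMod 2 // v ≠ 0}}
    (h : ∀ i, u.1 i ≠ 0 ↔ v.1 i ≠ 0) : u = v := by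
  have hZMod : ∀ x y : ZMod 2, (x ≠ 0 ↔ y ≠ 0) → x = y := by decide
  exact Subtype.ext (funext fun i => hZMod _ _ (h i))

theorem eq_single_of_forall_ne {w : {v : Fin n → ZMod 2 // v ≠ 0}} {j : Fin n}
    (h : ∀ i ≠ j, w.1 i = 0) : w = single j := by
  refine ext_of_apply_ne_zero_iff fun i => ?_
  rcases eq_or_ne i j with rfl | hi
  · obtain ⟨k, hk⟩ := exists_apply_ne_zero w
    obtain rfl : k = i := by_contra fun hki => hk (h k hki)
    simpa using hk
  · simp [h i hi, hi]

theorem resolves_stdBasis : Resolves (NZCGraph (ZMod 2) n) (stdBasis (ZMod 2) n) :=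
  resolves_iff.2 fun _ _ _ _ h => ext_of_apply_ne_zero_iff fun i => by
    simpa only [meets_single] using h _ (mem_range_self i)

theorem resolves_hyperplane (i₀ : Fin n) : Resolves (NZCGraph (ZMod 2) n) (hyperplane i₀) := by
  refine resolves_iff.2 fun u v hu hv h => ext_of_apply_ne_zero_iff fun i => ?_
  rcases eq_or_ne i i₀ with rfl | hi
  · exact iff_of_true hu hv
  · simpa only [meets_single] using h (single i) (single_apply_eq_zero.2 hi.symm)

theorem minimalResolves_hyperplane (i₀ : Fin n) :
    MinimalResolves (NZCGraph (ZMod 2) n) (hyperplane i₀) := by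
  refine minimalResolves_iff.2 ⟨resolves_hyperplane i₀, fun x hx => ?_⟩
  -- `x` and `x + e_{i₀}` agree off `i₀`, where all of the hyperplane vanishes
  let y : {v : Fin n → ZMod 2 // v ≠ 0} :=
    ⟨update x.1 i₀ 1, fun h => absurd (congrFun h i₀) (by simp)⟩
  refine not_resolves_of_meets_iff (u := x) (v := y) (fun h => h.2 rfl)
    (fun h => by simpa [y, hyperplane] using h.1) (fun h => ?_) fun w hw => ?_
  · simpa [y, show x.1 i₀ = 0 from hx] using congrFun (congrArg Subtype.val h) i₀
  · refine exists_congr fun i => and_congr_left fun hwi => ?_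
    have hi : i ≠ i₀ := fun hi => hwi (hi ▸ hw.1)
    simp [y, hi]

theorem not_resolves_of_subset_stdBasis_union_hyperplane (hn : 3 ≤ n) {i₀ j : Fin n} (hj : i₀ ≠ j)
    {W : Set {v : Fin n → ZMod 2 // v ≠ 0}} (hW : W ⊆ stdBasis (ZMod 2) n ∪ hyperplane i₀)
    (hjW : single j ∉ W) : ¬ Resolves (NZCGraph (ZMod 2) n) W := by
  obtain ⟨a, b, ha, hb, hab⟩ := Finset.one_lt_card_iff.1
    (show 1 < ({j}ᶜ : Finset (Fin n)).card by simp [Finset.card_compl]; omega)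
  have hout : ∀ (s : Finset (Fin n)) (hs : s.Nonempty), i₀ ∈ s → a ∈ s → b ∈ s →
      indicator s hs ∉ W := fun s hs h₀ ha hb hmem =>
    (hW hmem).elim (notMem_stdBasis (by simpa) (by simpa) hab) (by simpa [hyperplane])
  -- the all-ones vector and the one vanishing only at `j` are separated by `eⱼ` alone
  refine not_resolves_of_meets_iff
    (hout Finset.univ (Finset.univ_nonempty_iff.2 ⟨j⟩) (by simp) (by simp) (by simp))
    (hout {j}ᶜ (show ({j}ᶜ : Finset (Fin n)).Nonempty from ⟨a, ha⟩) (by simpa using hj) ha hb)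
    (fun h => ?_) fun w hw => ?_
  · simpa using congrArg (fun u => u.1 j = 0) h
  simp only [meets_comm (u := indicator _ _), meets_indicator]
  refine iff_of_true (by simpa using exists_apply_ne_zero w) ?_
  by_contra! hw'
  exact hjW <| eq_single_of_forall_ne (fun i hi => hw' i (by simpa using hi)) ▸ hw

theorem minimalResolves_stdBasis (hn : 3 ≤ n) :
    MinimalResolves (NZCGraph (ZMod 2) n) (stdBasis (ZMod 2) n) := by
  refine minimalResolves_iff.2 ⟨resolves_stdBasis, ?_⟩
  rintro _ ⟨j, rfl⟩
  have : Nontrivial (Fin n) := Fin.nontrivial_iff_two_le.2 (by omega)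
  obtain ⟨i₀, hi₀⟩ := exists_ne j
  exact not_resolves_of_subset_stdBasis_union_hyperplane hn hi₀
    (sdiff_subset.trans subset_union_left) fun h => h.2 rfl

theorem stdBasis_ssubset_insert_single_hyperplane_diff (hn : 4 ≤ n) {i₀ : Fin n}
    {s : {v : Fin n → ZMod 2 // v ≠ 0}} (hs : s ∉ stdBasis (ZMod 2) n) :
    stdBasis (ZMod 2) n ⊂ insert (single i₀) (hyperplane i₀ \ {s}) := by
  refine (ssubset_iff_of_subset ?_).2 ?_
  · rintro _ ⟨i, rfl⟩
    rcases eq_or_ne i i₀ with rfl | hi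
    · exact mem_insert _ _
    · exact mem_insert_of_mem _
        ⟨single_apply_eq_zero.2 hi.symm, fun h => hs (h ▸ mem_range_self i)⟩
  obtain ⟨a, b, c, ha, hb, hc, hab, hac, hbc⟩ := Finset.two_lt_card_iff.1
    (show 2 < ({i₀}ᶜ : Finset (Fin n)).card by simp [Finset.card_compl]; omega)
  let x (d : Fin n) : {v : Fin n → ZMod 2 // v ≠ 0} :=
    indicator {a, d} (Finset.insert_nonempty a {d})
  have hx : ∀ d ∈ ({i₀}ᶜ : Finset (Fin n)), a ≠ d →
      x d ∈ hyperplane i₀ ∧ x d ∉ stdBasis (ZMod 2) n := fun d hd had =>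
    ⟨indicator_apply_eq_zero.2 (by simp_all [eq_comm]),
      notMem_stdBasis (a := a) (b := d) (by simp [x]) (by simp [x]) had⟩
  -- one of `e_a + e_b` and `e_a + e_c` differs from `s`
  by_cases hsb : x b = s
  · refine ⟨x c, mem_insert_of_mem _ ⟨(hx c hc hac).1, fun h => ?_⟩, (hx c hc hac).2⟩
    have : x b = x c := hsb.trans h.symm
    simpa [x, hbc, Ne.symm hab] using congrArg (fun u => u.1 b = 0) this
  · exact ⟨x b, mem_insert_of_mem _ ⟨(hx b hb hab).1, hsb⟩, (hx b hb hab).2⟩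

theorem not_exchangeProperty_of_four_le (hn : 4 ≤ n) :
    ¬ ExchangeProperty (NZCGraph (ZMod 2) n) := by
  intro h
  let i₀ : Fin n := ⟨0, by omega⟩
  obtain ⟨s, hs, hmin⟩ := h _ _ (minimalResolves_stdBasis (by omega))
    (minimalResolves_hyperplane i₀) (single i₀) (mem_range_self i₀)
  by_cases hsB : s ∈ stdBasis (ZMod 2) n
  · obtain ⟨j, rfl⟩ := hsB
    refine not_resolves_of_subset_stdBasis_union_hyperplane (by omega) (single_apply_eq_zero.1 hs)
      (insert_subset_iff.2 ⟨Or.inl (mem_range_self i₀), sdiff_subset.trans subset_union_right⟩)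
      ?_ hmin.1
    rintro (h | ⟨-, h⟩)
    · exact single_apply_eq_zero.1 hs (single_injective h).symm
    · exact h rfl
  · exact hmin.2 _ (stdBasis_ssubset_insert_single_hyperplane_diff hn hsB) resolves_stdBasis

set_option synthInstance.maxSize 1000 in
theorem not_exchangeProperty_three : ¬ ExchangeProperty (NZCGraph (ZMod 2) 3) := by
  let W : Set {v : Fin 3 → ZMod 2 // v ≠ 0} := {single 1, indicator {0, 1} (by simp),
    indicator {0, 2} (by simp), indicator Finset.univ Finset.univ_nonempty}
  have hW : MinimalResolves (NZCGraph (ZMod 2) 3) W := by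
    simp only [minimalResolves_iff, resolves_iff]
    decide
  have hexchange :
      ∀ s ∈ W, ¬ MinimalResolves (NZCGraph (ZMod 2) 3) (insert (single 0) (W \ {s})) := by
    simp only [minimalResolves_iff, resolves_iff]
    decide
  intro h
  obtain ⟨s, hs, hmin⟩ := h _ W (minimalResolves_stdBasis le_rfl) hW (single 0) (mem_range_self 0)
  exact hexchange s hs hmin

end ZModTwo

end NZCGraph

theorem stmt15 (n : ℕ) (hn : 3 ≤ n) : ¬ ExchangeProperty (NZCGraph (ZMod 2) n) := by
  obtain rfl | hn := hn.eq_or_lt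
  · exact NZCGraph.not_exchangeProperty_three
  · exact NZCGraph.not_exchangeProperty_of_four_le hn
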